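/- arXiv:2404.10683 — 3 statements merged into one kernel-verified Lean document; each statement's English description precedes it below -/
import Mathlib

section
/- Let I = {0,...,N−1}, V1, V2 ⊆ I with V1∩V2 = ∅ and V1, V2 nonempty, and c1, c2 ∈ [0,1] with c1 + c2 ≤ 1. Then every x in the polytope P = {x ∈ ℝ^N : x ≥ 0, ∑_i x_i = 1, ∑_{i∈V1} x_i ≥ c1, ∑_{i∈V2} x_i ≥ c2} can be written as x = c1·y2 + c2·y3 + (1−c1−c2)·y4 where y2 ∈ PSS_{V1}, y3 ∈ PSS_{V2}, y4 ∈ PSS_I. -/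
def PSS (N : ℕ) (K : Finset (Fin N)) : Set (Fin N → ℝ) :=
  {y | (∀ i, 0 ≤ y i) ∧ (∑ j ∈ K, y j = 1) ∧ ∀ j ∉ K, y j = 0}

lemma pss_aux (N : ℕ) (V : Finset (Fin N)) (hV : V.Nonempty) (c : ℝ) (hc : 0 ≤ c)
    (x : Fin N → ℝ) (hx0 : ∀ i, 0 ≤ x i) (hcs : c ≤ ∑ i ∈ V, x i) :
    ∃ y ∈ PSS N V, (∀ i, c * y i ≤ x i) ∧
      (c = ∑ i ∈ V, x i → ∀ i ∈ V, c * y i = x i) := by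
  obtain ⟨v, hv⟩ := hV
  by_cases hs0 : (∑ i ∈ V, x i) = 0
  · have hc0 : c = 0 := le_antisymm (hs0 ▸ hcs) hc
    have hxz : ∀ i ∈ V, x i = 0 :=
      (Finset.sum_eq_zero_iff_of_nonneg (fun j _ => hx0 j)).mp hs0
    refine ⟨fun i => if i = v then 1 else 0, ⟨?_, ?_, ?_⟩, ?_, ?_⟩
    · intro i; dsimp; split <;> norm_num
    · simp [Finset.sum_ite_eq', hv]
    · intro j hj; dsimp; rw [if_neg]; rintro rfl; exact hj hv
    · intro i; simpa [hc0] using hx0 i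
    · intro _ i hi; simp [hc0, hxz i hi]
  · have hspos : 0 < ∑ i ∈ V, x i := (hc.trans hcs).lt_of_ne (Ne.symm hs0)
    refine ⟨fun i => if i ∈ V then x i / (∑ j ∈ V, x j) else 0, ⟨?_, ?_, ?_⟩, ?_, ?_⟩
    · intro i; dsimp; split
      · exact div_nonneg (hx0 i) hspos.le
      · exact le_refl 0
    · have h1 : ∑ i ∈ V, (if i ∈ V then x i / (∑ j ∈ V, x j) else 0)
          = ∑ i ∈ V, x i / (∑ j ∈ V, x j) :=
        Finset.sum_congr rfl fun i hi => if_pos hi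
      rw [h1, ← Finset.sum_div, div_self hs0]
    · intro j hj; simp [hj]
    · intro i; dsimp; split
      · calc c * (x i / (∑ j ∈ V, x j))
            ≤ (∑ j ∈ V, x j) * (x i / (∑ j ∈ V, x j)) :=
              mul_le_mul_of_nonneg_right hcs (div_nonneg (hx0 i) hspos.le)
          _ = x i := by rw [mul_comm, div_mul_cancel₀ _ hs0]
      · simpa using hx0 i
    · intro h i hi; dsimp; rw [if_pos hi, h, mul_comm, div_mul_cancel₀ _ hs0]

theorem disjoint_decomposition
    (N : ℕ) (V1 V2 : Finset (Fin N)) (hdisj : Disjoint V1 V2)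
    (hV1 : V1.Nonempty) (hV2 : V2.Nonempty)
    (c1 c2 : ℝ) (hc10 : 0 ≤ c1) (hc11 : c1 ≤ 1) (hc20 : 0 ≤ c2) (hc21 : c2 ≤ 1)
    (hsum : c1 + c2 ≤ 1)
    (x : Fin N → ℝ) (hx0 : ∀ i, 0 ≤ x i) (hx1 : ∑ i, x i = 1)
    (hxc1 : c1 ≤ ∑ i ∈ V1, x i) (hxc2 : c2 ≤ ∑ i ∈ V2, x i) :
    ∃ y2 ∈ PSS N V1, ∃ y3 ∈ PSS N V2, ∃ y4 ∈ PSS N Finset.univ,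
      x = fun i => c1 * y2 i + c2 * y3 i + (1 - c1 - c2) * y4 i := by
  obtain ⟨y2, hy2, hy2le, hy2eq⟩ := pss_aux N V1 hV1 c1 hc10 x hx0 hxc1
  obtain ⟨y3, hy3, hy3le, hy3eq⟩ := pss_aux N V2 hV2 c2 hc20 x hx0 hxc2
  have hpt : ∀ i, c1 * y2 i + c2 * y3 i ≤ x i := by
    intro i
    by_cases h1 : i ∈ V1
    · have h3 : y3 i = 0 := hy3.2.2 i (Finset.disjoint_left.mp hdisj h1)
      simpa [h3] using hy2le i
    · by_cases h2 : i ∈ V2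
      · have h2' : y2 i = 0 := hy2.2.2 i h1
        simpa [h2'] using hy3le i
      · simpa [hy2.2.2 i h1, hy3.2.2 i h2] using hx0 i
  have hsum2 : ∑ i, y2 i = 1 := by
    rw [← Finset.sum_subset (Finset.subset_univ V1) (fun i _ hi => hy2.2.2 i hi)]
    exact hy2.2.1
  have hsum3 : ∑ i, y3 i = 1 := by
    rw [← Finset.sum_subset (Finset.subset_univ V2) (fun i _ hi => hy3.2.2 i hi)]
    exact hy3.2.1
  by_cases hd : 1 - c1 - c2 = 0
  · -- degenerate case c1 + c2 = 1
    obtain ⟨v1, hv1⟩ := hV1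
    have hunion : ∑ i ∈ V1 ∪ V2, x i = (∑ i ∈ V1, x i) + (∑ i ∈ V2, x i) :=
      Finset.sum_union hdisj
    have hle1 : ∑ i ∈ V1 ∪ V2, x i ≤ 1 := by
      rw [← hx1]
      exact Finset.sum_le_sum_of_subset_of_nonneg (Finset.subset_univ _)
        (fun i _ _ => hx0 i)
    have hs1 : c1 = ∑ i ∈ V1, x i := by linarith
    have hs2 : c2 = ∑ i ∈ V2, x i := by linarith
    have hcompl : ∑ i ∈ (V1 ∪ V2)ᶜ, x i = 0 := by
      have := Finset.sum_add_sum_compl (V1 ∪ V2) x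
      rw [hx1] at this
      linarith
    have hzero : ∀ i, i ∉ V1 ∪ V2 → x i = 0 := by
      intro i hi
      exact (Finset.sum_eq_zero_iff_of_nonneg (fun j _ => hx0 j)).mp hcompl i
        (Finset.mem_compl.mpr hi)
    refine ⟨y2, hy2, y3, hy3, fun i => if i = v1 then 1 else 0, ⟨?_, ?_, ?_⟩, ?_⟩
    · intro i; dsimp; split <;> norm_num
    · simp
    · intro j hj; exact absurd (Finset.mem_univ j) hj
    · funext i
      rw [hd, zero_mul, add_zero]
      by_cases h1 : i ∈ V1
      · have h3 : y3 i = 0 := hy3.2.2 i (Finset.disjoint_left.mp hdisj h1)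
        rw [h3, mul_zero, add_zero, hy2eq hs1 i h1]
      · by_cases h2 : i ∈ V2
        · have h2' : y2 i = 0 := hy2.2.2 i h1
          rw [h2', mul_zero, zero_add, hy3eq hs2 i h2]
        · rw [hy2.2.2 i h1, hy3.2.2 i h2,
            hzero i (by simp [h1, h2])]
          ring
  · have hdpos : 0 < 1 - c1 - c2 := lt_of_le_of_ne (by linarith) (Ne.symm hd)
    refine ⟨y2, hy2, y3, hy3,
      fun i => (x i - c1 * y2 i - c2 * y3 i) / (1 - c1 - c2), ⟨?_, ?_, ?_⟩, ?_⟩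
    · intro i
      exact div_nonneg (by linarith [hpt i]) hdpos.le
    · have h1 : ∑ i, (x i - c1 * y2 i - c2 * y3 i) = 1 - c1 - c2 := by
        rw [Finset.sum_sub_distrib, Finset.sum_sub_distrib, ← Finset.mul_sum,
          ← Finset.mul_sum, hx1, hsum2, hsum3]
        ring
      rw [← Finset.sum_div, h1, div_self hd]
    · intro j hj; exact absurd (Finset.mem_univ j) hj
    · funext i
      dsimp
      rw [mul_div_cancel₀ _ hd]
      ring
end

section
/- Let I = {0,...,N−1}, V ⊆ I nonempty, c ∈ [0,1]. Then the polytope P = {x ∈ ℝ^N : x ≥ 0, ∑_{i∈I} x_i = 1, ∑_{i∈V} x_i ≥ c} equals the set {c·y + (1−c)·w : y ∈ PSS_V, w ∈ PSS_I}, where PSS_K = {y ∈ ℝ^N : y ≥ 0, ∑_{j∈K} y_j = 1, y_j = 0 for j∉K}. -/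
/-! Every point `x` of the polytope carries mass at least `c` on `V`. Scaling its restriction to
`V` down to total mass exactly `c` leaves a nonnegative remainder of mass `1 - c`; normalizing
the two pieces gives the points `y ∈ PSS_V` and `w ∈ PSS_I`. Conversely, `c • y` already puts mass
`c` on `V`. -/

open Finset

theorem exists_nonneg_le_sum_eq {ι : Type*} [DecidableEq ι] (V : Finset ι) (x : ι → ℝ)
    (hx : ∀ i, 0 ≤ x i) {c : ℝ} (hc : 0 ≤ c) (hcV : c ≤ ∑ i ∈ V, x i) :
    ∃ a : ι → ℝ, (∀ i, 0 ≤ a i) ∧ a ≤ x ∧ (∀ j ∉ V, a j = 0) ∧ ∑ i ∈ V, a i = c := by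
  set s := ∑ i ∈ V, x i
  have hts : c / s ≤ 1 := div_le_one_of_le₀ hcV (hc.trans hcV)
  refine ⟨fun i => if i ∈ V then c / s * x i else 0, fun i => ?_, fun i => ?_,
    fun j hj => if_neg hj, ?_⟩
  · dsimp only
    split_ifs
    exacts [mul_nonneg (div_nonneg hc (hc.trans hcV)) (hx i), le_rfl]
  · dsimp only
    split_ifs
    exacts [mul_le_of_le_one_left (hx i) hts, hx i]
  · rw [sum_ite_mem, inter_self, ← mul_sum]
    -- `c / 0 = 0` is harmless: `s = 0` forces `c = 0`.
    exact div_mul_cancel_of_imp fun hs => le_antisymm (hs ▸ hcV) hc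

theorem sum_eq_one_of_mem_PSS {N : ℕ} {K : Finset (Fin N)} {y : Fin N → ℝ}
    (hy : y ∈ PSS N K) : ∑ i, y i = 1 :=
  (sum_subset (subset_univ K) fun j _ hj => hy.2.2 j hj).symm.trans hy.2.1

theorem exists_mem_PSS_eq_smul {N : ℕ} {K : Finset (Fin N)} (hK : K.Nonempty)
    (r : Fin N → ℝ) (hr : ∀ i, 0 ≤ r i) (hrK : ∀ j ∉ K, r j = 0) :
    ∃ y ∈ PSS N K, r = (∑ j ∈ K, r j) • y := by
  by_cases hm : ∑ j ∈ K, r j = 0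
  · obtain ⟨v, hv⟩ := hK
    have hr0 : r = 0 := funext fun j => by
      by_cases hj : j ∈ K
      · exact (sum_eq_zero_iff_of_nonneg fun i _ => hr i).1 hm j hj
      · exact hrK j hj
    refine ⟨Pi.single v 1, ⟨fun i => ?_, by simp [hv], fun j hj => ?_⟩, by simp [hr0]⟩
    · by_cases h : i = v <;> simp [h]
    · exact Pi.single_eq_of_ne (ne_of_mem_of_not_mem hv hj).symm 1
  · refine ⟨(∑ j ∈ K, r j)⁻¹ • r,
      ⟨fun i => mul_nonneg (inv_nonneg.2 (sum_nonneg fun i _ => hr i)) (hr i), ?_,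
        fun j hj => by simp [hrK j hj]⟩, by rw [smul_smul, mul_inv_cancel₀ hm, one_smul]⟩
    simp only [Pi.smul_apply, smul_eq_mul, ← mul_sum, inv_mul_cancel₀ hm]

theorem exists_mem_PSS_decomposition {N : ℕ} {V : Finset (Fin N)} (hV : V.Nonempty) {c : ℝ}
    (hc : 0 ≤ c) {x : Fin N → ℝ} (hx0 : ∀ i, 0 ≤ x i) (hx1 : ∑ i, x i = 1)
    (hcV : c ≤ ∑ i ∈ V, x i) :
    ∃ y ∈ PSS N V, ∃ w ∈ PSS N univ, x = c • y + (1 - c) • w := by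
  obtain ⟨a, ha0, hax, haV, hac⟩ := exists_nonneg_le_sum_eq V x hx0 hc hcV
  have hb : ∑ i, (x - a) i = 1 - c := by
    rw [Pi.sub_def, sum_sub_distrib, hx1, ← hac,
      sum_subset (subset_univ V) fun j _ hj => haV j hj]
  obtain ⟨y, hy, hay⟩ := exists_mem_PSS_eq_smul hV a ha0 haV
  obtain ⟨w, hw, hxw⟩ := exists_mem_PSS_eq_smul (hV.mono (subset_univ V)) (x - a)
    (fun i => sub_nonneg.2 (hax i)) fun j hj => absurd (mem_univ j) hj
  rw [hac] at hay
  rw [hb] at hxw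
  refine ⟨y, hy, w, hw, ?_⟩
  calc x = a + (x - a) := (add_sub_cancel a x).symm
    _ = c • y + (1 - c) • w := by rw [hxw, ← hay]

theorem single_constraint_decomposition
    (N : ℕ) (V : Finset (Fin N)) (hV : V.Nonempty)
    (c : ℝ) (hc0 : 0 ≤ c) (hc1 : c ≤ 1) :
    {x : Fin N → ℝ | (∀ i, 0 ≤ x i) ∧ (∑ i, x i = 1) ∧ c ≤ ∑ i ∈ V, x i} =
      {x : Fin N → ℝ | ∃ y ∈ PSS N V, ∃ w ∈ PSS N Finset.univ,
        x = fun i => c * y i + (1 - c) * w i} := by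
  ext x
  constructor
  · rintro ⟨hx0, hx1, hcV⟩
    exact exists_mem_PSS_decomposition hV hc0 hx0 hx1 hcV
  · rintro ⟨y, hy, w, hw, rfl⟩
    have hw0 : 0 ≤ ∑ i ∈ V, w i := sum_nonneg fun i _ => hw.1 i
    refine ⟨fun i => by nlinarith [hy.1 i, hw.1 i], ?_, ?_⟩
    · rw [sum_add_distrib, ← mul_sum, ← mul_sum, sum_eq_one_of_mem_PSS hy,
        sum_eq_one_of_mem_PSS hw]
      ring
    · rw [sum_add_distrib, ← mul_sum, ← mul_sum, hy.2.1]
      nlinarith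
end

section
/- Let I = {0,...,N−1}, V1 ⊆ V2 ⊆ I with V1 nonempty, and c1, c2 ∈ [0,1] with c1 ≤ c2. Then P = {x ∈ ℝ^N : x ≥ 0, ∑ x_i = 1, ∑_{V1} x_i ≥ c1, ∑_{V2} x_i ≥ c2} equals {c1·y1 + (c2−c1)·y2 + (1−c2)·y3 : y1 ∈ PSS_{V1}, y2 ∈ PSS_{V2}, y3 ∈ PSS_I}. -/
lemma peel (N : ℕ) (K : Finset (Fin N)) (hK : K.Nonempty) (x : Fin N → ℝ)
    (hx : ∀ i, 0 ≤ x i) (c : ℝ) (hc0 : 0 ≤ c) (hc : c ≤ ∑ j ∈ K, x j) :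
    ∃ y ∈ PSS N K, ∀ i, c * y i ≤ x i := by
  set s := ∑ j ∈ K, x j with hs
  by_cases h0 : s = 0
  · have hc' : c = 0 := le_antisymm (h0 ▸ hc) hc0
    obtain ⟨k₀, hk₀⟩ := hK
    refine ⟨fun i => if i = k₀ then 1 else 0, ⟨?_, ?_, ?_⟩, ?_⟩
    · intro i; positivity
    · simp [Finset.sum_ite_eq' K k₀ (fun _ => (1:ℝ)), hk₀]
    · intro j hj
      have : j ≠ k₀ := fun h => hj (h ▸ hk₀)
      simp [this]
    · intro i; simp [hc']; exact hx i
  · have hspos : 0 < s := lt_of_le_of_ne (Finset.sum_nonneg fun i _ => hx i) (Ne.symm h0)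
    refine ⟨fun i => if i ∈ K then x i / s else 0, ⟨?_, ?_, ?_⟩, ?_⟩
    · intro i
      by_cases hi : i ∈ K <;> simp [hi]
      exact div_nonneg (hx i) hspos.le
    · rw [Finset.sum_congr rfl (fun i hi => if_pos hi), ← Finset.sum_div, ← hs,
        div_self h0]
    · intro j hj; simp [hj]
    · intro i
      by_cases hi : i ∈ K
      · simp only [hi, if_true]
        rw [mul_div_assoc', mul_comm, mul_div_assoc]
        calc x i * (c / s) ≤ x i * 1 := by
              apply mul_le_mul_of_nonneg_left _ (hx i)
              exact div_le_one_of_le₀ hc hspos.le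
          _ = x i := mul_one _
      · simp [hi]; exact hx i

theorem nested_constraints_decomposition
    (N : ℕ) (V1 V2 : Finset (Fin N)) (hsub : V1 ⊆ V2) (hV1 : V1.Nonempty)
    (c1 c2 : ℝ) (hc10 : 0 ≤ c1) (hc11 : c1 ≤ 1) (hc20 : 0 ≤ c2) (hc21 : c2 ≤ 1)
    (hc12 : c1 ≤ c2) :
    {x : Fin N → ℝ | (∀ i, 0 ≤ x i) ∧ (∑ i, x i = 1) ∧
        (c1 ≤ ∑ i ∈ V1, x i) ∧ (c2 ≤ ∑ i ∈ V2, x i)} =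
      {x : Fin N → ℝ | ∃ y1 ∈ PSS N V1, ∃ y2 ∈ PSS N V2, ∃ y3 ∈ PSS N Finset.univ,
        x = fun i => c1 * y1 i + (c2 - c1) * y2 i + (1 - c2) * y3 i} := by
  have hV2 : V2.Nonempty := hV1.mono hsub
  ext x
  simp only [Set.mem_setOf_eq]
  constructor
  · rintro ⟨hx0, hxsum, hx1, hx2⟩
    -- first peel
    obtain ⟨y1, hy1, hb1⟩ := peel N V1 hV1 x hx0 c1 hc10 hx1
    obtain ⟨hy10, hy1s, hy1z⟩ := hy1
    set x1 : Fin N → ℝ := fun i => x i - c1 * y1 i with hx1def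
    have hx10 : ∀ i, 0 ≤ x1 i := fun i => sub_nonneg.mpr (hb1 i)
    -- sum of y1 over V2 equals 1
    have hy1V2 : ∑ j ∈ V2, y1 j = 1 := by
      rw [← Finset.sum_subset hsub (fun i _ hi => hy1z i hi)]; exact hy1s
    have hy1U : ∑ j, y1 j = 1 := by
      rw [← Finset.sum_subset (Finset.subset_univ V1) (fun i _ hi => hy1z i hi)]
      exact hy1s
    have hx1V2 : ∑ j ∈ V2, x1 j = (∑ j ∈ V2, x j) - c1 := by
      simp [hx1def, Finset.sum_sub_distrib, ← Finset.mul_sum, hy1V2]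
    have hx1U : ∑ j, x1 j = 1 - c1 := by
      simp [hx1def, Finset.sum_sub_distrib, ← Finset.mul_sum, hy1U, hxsum]
    -- second peel
    obtain ⟨y2, hy2, hb2⟩ := peel N V2 hV2 x1 hx10 (c2 - c1) (by linarith)
      (by rw [hx1V2]; linarith)
    obtain ⟨hy20, hy2s, hy2z⟩ := hy2
    set x2 : Fin N → ℝ := fun i => x1 i - (c2 - c1) * y2 i with hx2def
    have hx20 : ∀ i, 0 ≤ x2 i := fun i => sub_nonneg.mpr (hb2 i)
    have hy2U : ∑ j, y2 j = 1 := by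
      rw [← Finset.sum_subset (Finset.subset_univ V2) (fun i _ hi => hy2z i hi)]
      exact hy2s
    have hx2U : ∑ j, x2 j = 1 - c2 := by
      simp only [hx2def, Finset.sum_sub_distrib, ← Finset.mul_sum, hy2U, hx1U]
      ring
    -- third peel
    have : Nonempty (Fin N) := ⟨hV1.choose⟩
    obtain ⟨y3, hy3, hb3⟩ := peel N Finset.univ Finset.univ_nonempty x2 hx20 (1 - c2)
      (by linarith) (by rw [hx2U])
    obtain ⟨hy30, hy3s, hy3z⟩ := hy3
    refine ⟨y1, ⟨hy10, hy1s, hy1z⟩, y2, ⟨hy20, hy2s, hy2z⟩, y3, ⟨hy30, hy3s, hy3z⟩, ?_⟩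
    -- now x2 - (1-c2) y3 is nonneg and sums to 0, hence zero
    have hzero : ∀ i, x2 i - (1 - c2) * y3 i = 0 := by
      have hsum0 : ∑ i, (x2 i - (1 - c2) * y3 i) = 0 := by
        simp [Finset.sum_sub_distrib, ← Finset.mul_sum, hy3s, hx2U]
      have := (Finset.sum_eq_zero_iff_of_nonneg
        (fun i _ => sub_nonneg.mpr (hb3 i))).mp hsum0
      exact fun i => this i (Finset.mem_univ i)
    funext i
    have := hzero i
    simp only [hx2def, hx1def] at this
    linarith
  · rintro ⟨y1, ⟨hy10, hy1s, hy1z⟩, y2, ⟨hy20, hy2s, hy2z⟩, y3, ⟨hy30, hy3s, _⟩, rfl⟩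
    have hy1V2 : ∑ j ∈ V2, y1 j = 1 := by
      rw [← Finset.sum_subset hsub (fun i _ hi => hy1z i hi)]; exact hy1s
    have hy1U : ∑ j, y1 j = 1 := by
      rw [← Finset.sum_subset (Finset.subset_univ V1) (fun i _ hi => hy1z i hi)]
      exact hy1s
    have hy2U : ∑ j, y2 j = 1 := by
      rw [← Finset.sum_subset (Finset.subset_univ V2) (fun i _ hi => hy2z i hi)]
      exact hy2s
    refine ⟨?_, ?_, ?_, ?_⟩
    · intro i
      have := hy10 i; have := hy20 i; have := hy30 i
      have h1 : (0:ℝ) ≤ c1 * y1 i := by positivity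
      have h2 : (0:ℝ) ≤ (c2 - c1) * y2 i := mul_nonneg (by linarith) (hy20 i)
      have h3 : (0:ℝ) ≤ (1 - c2) * y3 i := mul_nonneg (by linarith) (hy30 i)
      dsimp only; linarith
    · simp [Finset.sum_add_distrib, ← Finset.mul_sum, hy1U, hy2U, hy3s]
    · have h2 : 0 ≤ ∑ i ∈ V1, (c2 - c1) * y2 i :=
        Finset.sum_nonneg fun i _ => mul_nonneg (by linarith) (hy20 i)
      have h3 : 0 ≤ ∑ i ∈ V1, (1 - c2) * y3 i :=
        Finset.sum_nonneg fun i _ => mul_nonneg (by linarith) (hy30 i)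
      simp only [Finset.sum_add_distrib]
      rw [← Finset.mul_sum, hy1s]
      linarith
    · have h3 : 0 ≤ ∑ i ∈ V2, (1 - c2) * y3 i :=
        Finset.sum_nonneg fun i _ => mul_nonneg (by linarith) (hy30 i)
      simp only [Finset.sum_add_distrib]
      rw [← Finset.mul_sum, ← Finset.mul_sum, hy1V2, hy2s]
      linarith
end
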